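/- arXiv:1407.0938 — 5 statements merged into one kernel-verified Lean document; each statement's English description precedes it below -/
import Mathlib

section
/- Let (λ_{iμ}) be an SAP-frame on an open set U ⊆ ℝⁿ with associated 1-form ω, and let g_{μν} := Σ_i λ_{iμ} λ_{iν} with Levi-Civita coefficients Γ̊^α_{μν}. Then the canonical connection decomposes as the Levi-Civita connection plus a contortion tensor built algebraically from ω and g: Γ^α_{μν} = Γ̊^α_{μν} + g_{μν} ω^α − δ^α_ν ω_μ at every point of U, where ω^α := Σ_β g^{αβ} ω_β. (This is the semi-symmetric metric-connection decomposition of Yano, adapted to the convention Γ^α_{μν} = Σ_i λ_i^α ∂_ν λ_{iμ} with torsion Λ^α_{μν} = δ^α_μ ω_ν − δ^α_ν ω_μ.) -/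
open scoped BigOperators

/-- Partial derivative of a scalar field on ℝⁿ in the ν-th coordinate direction. -/
noncomputable def pd {n : ℕ} (f : (Fin n → ℝ) → ℝ) (ν : Fin n) (x : Fin n → ℝ) : ℝ :=
  fderiv ℝ f x (Pi.single ν 1)

/-- Semi-symmetric decomposition of the canonical connection of an SAP-frame:
Γ^α_{μν} = Γ̊^α_{μν} + g_{μν} ω^α − δ^α_ν ω_μ, where Γ̊ is the Levi-Civita connection of
g_{μν} = Σ_i λ_{iμ} λ_{iν} and ω^α = Σ_β g^{αβ} ω_β. -/
theorem sap_canonical_connection_decomposition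
    (n : ℕ) (hn : 2 ≤ n)
    (U : Set (Fin n → ℝ)) (hU : IsOpen U)
    (lam laminv : Fin n → Fin n → (Fin n → ℝ) → ℝ)
    (hlam_smooth : ∀ i μ, ContDiffOn ℝ (⊤ : ℕ∞) (lam i μ) U)
    (hlaminv_smooth : ∀ i μ, ContDiffOn ℝ (⊤ : ℕ∞) (laminv i μ) U)
    (hinv₁ : ∀ x ∈ U, ∀ μ ν, (∑ i, laminv i μ x * lam i ν x) = if μ = ν then (1:ℝ) else 0)
    (hinv₂ : ∀ x ∈ U, ∀ i j, (∑ μ, laminv i μ x * lam j μ x) = if i = j then (1:ℝ) else 0)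
    -- the canonical (Weitzenböck) connection Γ^α_{μν} = Σ_i λ_i^α ∂_ν λ_{iμ}
    (Γ : Fin n → Fin n → Fin n → (Fin n → ℝ) → ℝ)
    (hΓ : ∀ α μ ν x, Γ α μ ν x = ∑ i, laminv i α x * pd (lam i μ) ν x)
    -- the SAP (semi-symmetry) condition: Λ^α_{μν} = δ^α_μ ω_ν − δ^α_ν ω_μ
    (ω : Fin n → (Fin n → ℝ) → ℝ)
    (hω_smooth : ∀ μ, ContDiffOn ℝ (⊤ : ℕ∞) (ω μ) U)
    (hSAP : ∀ x ∈ U, ∀ α μ ν,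
      Γ α μ ν x - Γ α ν μ x
        = (if α = μ then ω ν x else 0) - (if α = ν then ω μ x else 0))
    -- the metric g_{μν} = Σ_i λ_{iμ} λ_{iν}, its pointwise inverse g^{μν},
    -- and the Levi-Civita (Christoffel) coefficients Γ̊^α_{μν}
    (g ginv : Fin n → Fin n → (Fin n → ℝ) → ℝ)
    (hg : ∀ μ ν x, g μ ν x = ∑ i, lam i μ x * lam i ν x)
    (hginv_smooth : ∀ μ ν, ContDiffOn ℝ (⊤ : ℕ∞) (ginv μ ν) U)
    (hginv : ∀ x ∈ U, ∀ μ ν, (∑ σ, g μ σ x * ginv σ ν x) = if μ = ν then (1:ℝ) else 0)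
    (Γ₀ : Fin n → Fin n → Fin n → (Fin n → ℝ) → ℝ)
    (hΓ₀ : ∀ α μ ν x, Γ₀ α μ ν x
      = (1/2) * ∑ ε, ginv α ε x * (pd (g ε ν) μ x + pd (g ε μ) ν x - pd (g μ ν) ε x)) :
    ∀ x ∈ U, ∀ α μ ν,
      Γ α μ ν x
        = Γ₀ α μ ν x + g μ ν x * (∑ β, ginv α β x * ω β x)
            - (if α = ν then ω μ x else 0) := by

  intro x hx α μ ν
  -- differentiability of the frame components at x
  have hdiff : ∀ i μ', DifferentiableAt ℝ (lam i μ') x := fun i μ' =>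
    ((hlam_smooth i μ').contDiffAt (hU.mem_nhds hx)).differentiableAt (by simp)
  -- the helper tensor T a b c = ∑ i, ∂_c λ_{i b} · λ_{i a}
  set T : Fin n → Fin n → Fin n → ℝ :=
    fun a b c => ∑ i, pd (lam i b) c x * lam i a x with hTdef
  -- derivative of the metric (Leibniz)
  have hpdg : ∀ a b c, pd (g a b) c x = T b a c + T a b c := by
    intro a b c
    have hfun : g a b = fun y => ∑ i, lam i a y * lam i b y := funext fun y => hg a b y
    have : pd (g a b) c x
        = ∑ i, (lam i a x * pd (lam i b) c x + lam i b x * pd (lam i a) c x) := by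
      simp only [pd, hfun]
      rw [fderiv_fun_sum (A := fun i y => lam i a y * lam i b y) (fun i _ => ((hdiff i a).mul (hdiff i b)))]
      rw [ContinuousLinearMap.sum_apply]
      refine Finset.sum_congr rfl fun i _ => ?_
      rw [fderiv_fun_mul (hdiff i a) (hdiff i b)]
      simp [pd]
    rw [this, hTdef]
    simp only []
    rw [← Finset.sum_add_distrib]
    exact Finset.sum_congr rfl fun i _ => by ring
  -- lowering: ∑_β g_{aβ} Γ^β_{bc} = T a b c
  have hA : ∀ a b c, (∑ β, g a β x * Γ β b c x) = T a b c := by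
    intro a b c
    calc (∑ β, g a β x * Γ β b c x)
        = ∑ β, ∑ j, ∑ i, (lam j a x * pd (lam i b) c x) * (laminv i β x * lam j β x) := by
          refine Finset.sum_congr rfl fun β _ => ?_
          rw [hg, hΓ, Finset.sum_mul_sum]
          exact Finset.sum_congr rfl fun j _ => Finset.sum_congr rfl fun i _ => by ring
      _ = ∑ j, ∑ i, (lam j a x * pd (lam i b) c x) * (∑ β, laminv i β x * lam j β x) := by
          rw [Finset.sum_comm]
          refine Finset.sum_congr rfl fun j _ => ?_
          rw [Finset.sum_comm]
          exact Finset.sum_congr rfl fun i _ => (Finset.mul_sum _ _ _).symm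
      _ = ∑ j, ∑ i, (lam j a x * pd (lam i b) c x) * (if i = j then 1 else 0) := by
          refine Finset.sum_congr rfl fun j _ => Finset.sum_congr rfl fun i _ => ?_
          rw [hinv₂ x hx i j]
      _ = T a b c := by
          rw [hTdef]
          refine Finset.sum_congr rfl fun j _ => ?_
          simp [Finset.sum_ite_eq, mul_comm]
  -- symmetry of g
  have hgsymm : ∀ a b, g a b x = g b a x := by
    intro a b; rw [hg, hg]; exact Finset.sum_congr rfl fun i _ => mul_comm _ _
  -- ginv is also a left inverse of g
  have hcomm : ∀ a b, (∑ ε, ginv a ε x * g ε b x) = if a = b then (1:ℝ) else 0 := by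
    have hM : (Matrix.of fun μ' ν' => g μ' ν' x) * (Matrix.of fun μ' ν' => ginv μ' ν' x) = 1 := by
      ext μ' ν'
      simp [Matrix.mul_apply, Matrix.one_apply, hginv x hx μ' ν']
    have hN := mul_eq_one_comm.mp hM
    intro a b
    have := congrFun (congrFun hN a) b
    simpa [Matrix.mul_apply, Matrix.one_apply] using this
  -- raising: Γ^α_{μν} = ∑_ε g^{αε} T ε μ ν
  have hGamma_eq : ∀ b c, Γ α b c x = ∑ ε, ginv α ε x * T ε b c := by
    intro b c
    calc Γ α b c x = ∑ β, (if α = β then (1:ℝ) else 0) * Γ β b c x := by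
          simp [Finset.sum_ite_eq]
      _ = ∑ β, (∑ ε, ginv α ε x * g ε β x) * Γ β b c x := by
          exact Finset.sum_congr rfl fun β _ => by rw [hcomm α β]
      _ = ∑ β, ∑ ε, ginv α ε x * (g ε β x * Γ β b c x) := by
          refine Finset.sum_congr rfl fun β _ => ?_
          rw [Finset.sum_mul]
          exact Finset.sum_congr rfl fun ε _ => by ring
      _ = ∑ ε, ginv α ε x * (∑ β, g ε β x * Γ β b c x) := by
          rw [Finset.sum_comm]
          exact Finset.sum_congr rfl fun ε _ => (Finset.mul_sum _ _ _).symm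
      _ = ∑ ε, ginv α ε x * T ε b c := by
          exact Finset.sum_congr rfl fun ε _ => by rw [hA]
  -- lowered torsion
  have hTors : ∀ a b c, T a b c - T a c b = g a b x * ω c x - g a c x * ω b x := by
    intro a b c
    have h1 : T a b c - T a c b = ∑ β, g a β x * (Γ β b c x - Γ β c b x) := by
      rw [← hA a b c, ← hA a c b, ← Finset.sum_sub_distrib]
      exact Finset.sum_congr rfl fun β _ => by ring
    rw [h1]
    have h2 : ∀ β, g a β x * (Γ β b c x - Γ β c b x)
        = g a β x * ((if β = b then ω c x else 0) - (if β = c then ω b x else 0)) := by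
      intro β; rw [hSAP x hx β b c]
    rw [Finset.sum_congr rfl fun β _ => h2 β]
    simp [mul_sub, Finset.sum_sub_distrib, Finset.sum_ite_eq, mul_ite]
  -- the Christoffel bracket
  have hbracket : ∀ ε, pd (g ε ν) μ x + pd (g ε μ) ν x - pd (g μ ν) ε x
      = 2 * T ε μ ν + 2 * (g ε ν x * ω μ x) - 2 * (g μ ν x * ω ε x) := by
    intro ε
    have t1 := hTors ν ε μ
    have t2 := hTors μ ε ν
    have t3 := hTors ε ν μ
    rw [hgsymm ν ε] at t1
    rw [hgsymm μ ε] at t2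
    rw [hgsymm ν μ] at t1
    rw [hpdg ε ν μ, hpdg ε μ ν, hpdg μ ν ε]
    linarith [t1, t2, t3]
  -- assemble
  have hsum : Γ₀ α μ ν x
      = (∑ ε, ginv α ε x * T ε μ ν) + (if α = ν then ω μ x else 0)
          - g μ ν x * (∑ ε, ginv α ε x * ω ε x) := by
    rw [hΓ₀]
    calc (1/2 : ℝ) * ∑ ε, ginv α ε x * (pd (g ε ν) μ x + pd (g ε μ) ν x - pd (g μ ν) ε x)
        = (1/2 : ℝ) * ∑ ε, (2 * (ginv α ε x * T ε μ ν)
            + 2 * ((ginv α ε x * g ε ν x) * ω μ x)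
            - 2 * (g μ ν x * (ginv α ε x * ω ε x))) := by
          congr 1
          exact Finset.sum_congr rfl fun ε _ => by rw [hbracket ε]; ring
      _ = (1/2 : ℝ) * (2 * (∑ ε, ginv α ε x * T ε μ ν)
            + 2 * ((∑ ε, ginv α ε x * g ε ν x) * ω μ x)
            - 2 * (g μ ν x * (∑ ε, ginv α ε x * ω ε x))) := by
          rw [Finset.sum_sub_distrib, Finset.sum_add_distrib,
            ← Finset.mul_sum, ← Finset.mul_sum, ← Finset.mul_sum,
            ← Finset.sum_mul, ← Finset.mul_sum]
      _ = (∑ ε, ginv α ε x * T ε μ ν) + (if α = ν then ω μ x else 0)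
            - g μ ν x * (∑ ε, ginv α ε x * ω ε x) := by
          rw [hcomm α ν]
          split_ifs <;> ring
  rw [hsum, hGamma_eq μ ν]
  ring
end

section
/- (Theorem 1 of the paper.) Let n ≥ 3 and let (λ_{iμ}) be an SAP-frame on an open set U ⊆ ℝⁿ with associated 1-form ω. Then the second-order covariant tensor ω_{μ|ν} obtained by covariant differentiation of ω with respect to the canonical connection is symmetric: ω_{μ|ν} = ω_{ν|μ} for all μ, ν at every point of U, where ω_{μ|ν} := ∂_ν ω_μ − Σ_ε Γ^ε_{μν} ω_ε. -/
open scoped BigOperators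

/-- `pd` only depends on the germ of the function near `x`. -/
lemma pd_congr_nhds {n : ℕ} {f g : (Fin n → ℝ) → ℝ} {ν : Fin n} {x}
    (h : f =ᶠ[nhds x] g) : pd f ν x = pd g ν x := by
  unfold pd; rw [h.fderiv_eq]

lemma pd_sub {n : ℕ} {f g : (Fin n → ℝ) → ℝ} {ν : Fin n} {x}
    (hf : DifferentiableAt ℝ f x) (hg : DifferentiableAt ℝ g x) :
    pd (fun y => f y - g y) ν x = pd f ν x - pd g ν x := by
  unfold pd; rw [fderiv_fun_sub hf hg]; rfl

lemma pd_neg {n : ℕ} {f : (Fin n → ℝ) → ℝ} {ν : Fin n} {x} :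
    pd (fun y => -f y) ν x = - pd f ν x := by
  unfold pd; rw [fderiv_fun_neg]; rfl

lemma pd_const {n : ℕ} {c : ℝ} {ν : Fin n} {x} : pd (fun _ => c) ν x = 0 := by
  unfold pd; rw [fderiv_fun_const]; rfl

/-- Leibniz rule for a finite sum of products. -/
lemma pd_finsum_mul {n : ℕ} {f g : Fin n → (Fin n → ℝ) → ℝ} {ν : Fin n} {x}
    (hf : ∀ i, DifferentiableAt ℝ (f i) x) (hg : ∀ i, DifferentiableAt ℝ (g i) x) :
    pd (fun y => ∑ i, f i y * g i y) ν x
      = ∑ i, (pd (f i) ν x * g i x + f i x * pd (g i) ν x) := by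
  unfold pd
  have h : HasFDerivAt (fun y => ∑ i, f i y * g i y)
      (∑ i, (f i x • fderiv ℝ (g i) x + g i x • fderiv ℝ (f i) x)) x :=
    HasFDerivAt.fun_sum fun i _ => ((hf i).hasFDerivAt.mul (hg i).hasFDerivAt)
  rw [h.fderiv]
  simp [mul_comm]
  ring_nf
  exact Finset.sum_congr rfl fun i _ => by ring

/-- `pd` of a smooth function is smooth on an open set. -/
lemma pd_contDiffOn {n : ℕ} {f : (Fin n → ℝ) → ℝ} {U : Set (Fin n → ℝ)} (hU : IsOpen U)
    (hf : ContDiffOn ℝ (⊤ : ℕ∞) f U) (ν : Fin n) : ContDiffOn ℝ (⊤ : ℕ∞) (pd f ν) U := by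
  have h := hf.fderiv_of_isOpen hU (m := (⊤ : ℕ∞)) (by simp)
  exact h.clm_apply contDiffOn_const

/-- Symmetry of second partial derivatives of a smooth function. -/
lemma pd_pd_comm {n : ℕ} {f : (Fin n → ℝ) → ℝ} {U : Set (Fin n → ℝ)} (hU : IsOpen U) {x}
    (hx : x ∈ U) (hf : ContDiffOn ℝ (⊤ : ℕ∞) f U) (ν σ : Fin n) :
    pd (pd f ν) σ x = pd (pd f σ) ν x := by
  have hct : ContDiffAt ℝ (⊤ : ℕ∞) f x := hf.contDiffAt (hU.mem_nhds hx)
  have hsymm := hct.isSymmSndFDerivAt (by rw [minSmoothness_of_isRCLikeNormedField]; exact WithTop.coe_le_coe.mpr (le_top : (2 : ℕ∞) ≤ ⊤))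
  have hdf : DifferentiableAt ℝ (fderiv ℝ f) x :=
    ((hf.fderiv_of_isOpen hU (m := (⊤ : ℕ∞)) (by simp)).contDiffAt (hU.mem_nhds hx)).differentiableAt (by simp)
  have key : ∀ v w : Fin n → ℝ, fderiv ℝ (fun y => fderiv ℝ f y v) x w
      = fderiv ℝ (fderiv ℝ f) x w v := by
    intro v w
    rw [fderiv_clm_apply hdf (differentiableAt_const v)]
    simp
  show fderiv ℝ (fun y => fderiv ℝ f y (Pi.single ν 1)) x (Pi.single σ 1) = _
  rw [key, hsymm, ← key]
  rfl

/-- (Theorem 1 of the paper.) For an SAP-frame with associated 1-form ω, the second-order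
covariant tensor ω_{μ|ν} := ∂_ν ω_μ − Σ_ε Γ^ε_{μν} ω_ε (covariant derivative with respect
to the canonical connection) is symmetric: ω_{μ|ν} = ω_{ν|μ}. -/
theorem sap_covariant_derivative_symmetric
    (n : ℕ) (hn : 3 ≤ n)
    (U : Set (Fin n → ℝ)) (hU : IsOpen U)
    (lam laminv : Fin n → Fin n → (Fin n → ℝ) → ℝ)
    (hlam_smooth : ∀ i μ, ContDiffOn ℝ (⊤ : ℕ∞) (lam i μ) U)
    (hlaminv_smooth : ∀ i μ, ContDiffOn ℝ (⊤ : ℕ∞) (laminv i μ) U)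
    (hinv₁ : ∀ x ∈ U, ∀ μ ν, (∑ i, laminv i μ x * lam i ν x) = if μ = ν then (1:ℝ) else 0)
    (hinv₂ : ∀ x ∈ U, ∀ i j, (∑ μ, laminv i μ x * lam j μ x) = if i = j then (1:ℝ) else 0)
    -- the canonical (Weitzenböck) connection Γ^α_{μν} = Σ_i λ_i^α ∂_ν λ_{iμ}
    (Γ : Fin n → Fin n → Fin n → (Fin n → ℝ) → ℝ)
    (hΓ : ∀ α μ ν x, Γ α μ ν x = ∑ i, laminv i α x * pd (lam i μ) ν x)
    -- the SAP (semi-symmetry) condition: Λ^α_{μν} = δ^α_μ ω_ν − δ^α_ν ω_μ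
    (ω : Fin n → (Fin n → ℝ) → ℝ)
    (hω_smooth : ∀ μ, ContDiffOn ℝ (⊤ : ℕ∞) (ω μ) U)
    (hSAP : ∀ x ∈ U, ∀ α μ ν,
      Γ α μ ν x - Γ α ν μ x
        = (if α = μ then ω ν x else 0) - (if α = ν then ω μ x else 0)) :
    ∀ x ∈ U, ∀ μ ν,
      pd (ω μ) ν x - ∑ ε, Γ ε μ ν x * ω ε x
        = pd (ω ν) μ x - ∑ ε, Γ ε ν μ x * ω ε x := by
  intro x hx μ ν
  by_cases hμν : μ = ν
  · subst hμν; rfl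
  have hmem : U ∈ nhds x := hU.mem_nhds hx
  -- the connection coefficients are smooth on U
  have hΓfun : ∀ α μ' ν', Γ α μ' ν' = fun y => ∑ i, laminv i α y * pd (lam i μ') ν' y :=
    fun α μ' ν' => funext fun y => hΓ α μ' ν' y
  have hΓsmooth : ∀ α μ' ν', ContDiffOn ℝ (⊤ : ℕ∞) (Γ α μ' ν') U := by
    intro α μ' ν'
    rw [hΓfun]
    exact ContDiffOn.sum fun i _ =>
      (hlaminv_smooth i α).mul (pd_contDiffOn hU (hlam_smooth i μ') ν')
  have hdiff : ∀ (f : (Fin n → ℝ) → ℝ), ContDiffOn ℝ (⊤ : ℕ∞) f U → ∀ y ∈ U,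
      DifferentiableAt ℝ f y :=
    fun f hf y hy => ((hf.contDiffAt (hU.mem_nhds hy)).differentiableAt (by simp))
  have hdiffΓat : ∀ α a b, DifferentiableAt ℝ (Γ α a b) x :=
    fun α a b => hdiff _ (hΓsmooth α a b) x hx
  -- Step 1: ∂_ν λ_{jμ} = Σ_ε λ_{jε} Γ^ε_{μν} on U
  have step1 : ∀ y ∈ U, ∀ j μ' ν', pd (lam j μ') ν' y = ∑ ε, lam j ε y * Γ ε μ' ν' y := by
    intro y hy j μ' ν'
    have h : ∑ ε, lam j ε y * Γ ε μ' ν' y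
        = ∑ i, (∑ ε, laminv i ε y * lam j ε y) * pd (lam i μ') ν' y := by
      simp only [hΓ, Finset.mul_sum, Finset.sum_mul]
      rw [Finset.sum_comm]
      exact Finset.sum_congr rfl fun i _ => Finset.sum_congr rfl fun ε _ => by ring
    rw [h]
    simp [hinv₂ y hy, ite_mul, Finset.sum_ite_eq']
  -- Flatness ("curvature zero") of the canonical connection at x
  have K : ∀ α μ' ν' σ,
      pd (Γ α μ' ν') σ x + ∑ ε, Γ α ε σ x * Γ ε μ' ν' x
        = pd (Γ α μ' σ) ν' x + ∑ ε, Γ α ε ν' x * Γ ε μ' σ x := by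
    have hD : ∀ j μ' ν' σ, pd (pd (lam j μ') ν') σ x
        = ∑ ρ, lam j ρ x * (pd (Γ ρ μ' ν') σ x + ∑ ε, Γ ρ ε σ x * Γ ε μ' ν' x) := by
      intro j μ' ν' σ
      have heq : pd (lam j μ') ν' =ᶠ[nhds x] fun y => ∑ ε, lam j ε y * Γ ε μ' ν' y := by
        filter_upwards [hmem] with y hy
        exact step1 y hy j μ' ν'
      rw [pd_congr_nhds heq, pd_finsum_mul (fun ε => hdiff _ (hlam_smooth j ε) x hx)
          (fun ε => hdiffΓat ε μ' ν')]
      have h1 : ∀ ε, pd (lam j ε) σ x * Γ ε μ' ν' x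
          = ∑ ρ, lam j ρ x * (Γ ρ ε σ x * Γ ε μ' ν' x) := by
        intro ε; rw [step1 x hx j ε σ, Finset.sum_mul]
        exact Finset.sum_congr rfl fun ρ _ => by ring
      simp only [h1, mul_add, Finset.sum_add_distrib, Finset.mul_sum]
      rw [Finset.sum_comm]
      ring
    intro α μ' ν' σ
    have hsym : ∀ j, (∑ ρ, lam j ρ x * (pd (Γ ρ μ' ν') σ x + ∑ ε, Γ ρ ε σ x * Γ ε μ' ν' x))
        = ∑ ρ, lam j ρ x * (pd (Γ ρ μ' σ) ν' x + ∑ ε, Γ ρ ε ν' x * Γ ε μ' σ x) := by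
      intro j
      rw [← hD j μ' ν' σ, ← hD j μ' σ ν', pd_pd_comm hU hx (hlam_smooth j μ')]
    have hcontr : ∀ (C : Fin n → ℝ),
        (∑ j, laminv j α x * ∑ ρ, lam j ρ x * C ρ) = C α := by
      intro C
      have h : ∑ j, laminv j α x * ∑ ρ, lam j ρ x * C ρ
          = ∑ ρ, (∑ j, laminv j α x * lam j ρ x) * C ρ := by
        simp only [Finset.mul_sum, Finset.sum_mul]
        rw [Finset.sum_comm]
        exact Finset.sum_congr rfl fun ρ _ => Finset.sum_congr rfl fun j _ => by ring
      rw [h]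
      simp [hinv₁ x hx, ite_mul, Finset.sum_ite_eq]
    have h1 := hcontr (fun ρ => pd (Γ ρ μ' ν') σ x + ∑ ε, Γ ρ ε σ x * Γ ε μ' ν' x)
    have h2 := hcontr (fun ρ => pd (Γ ρ μ' σ) ν' x + ∑ ε, Γ ρ ε ν' x * Γ ε μ' σ x)
    rw [← h1, ← h2]
    exact Finset.sum_congr rfl fun j _ => by rw [hsym j]
  -- choose an auxiliary index σ distinct from μ and ν (possible since n ≥ 3)
  obtain ⟨σ, hσμ, hσν⟩ : ∃ σ : Fin n, σ ≠ μ ∧ σ ≠ ν := by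
    have hne : (({μ, ν} : Finset (Fin n))ᶜ).Nonempty := by
      rw [← Finset.card_pos, Finset.card_compl]
      have h2 : ({μ, ν} : Finset (Fin n)).card ≤ 2 :=
        (Finset.card_insert_le _ _).trans (by simp)
      have h3 : Fintype.card (Fin n) = n := Fintype.card_fin n
      omega
    obtain ⟨σ, hσ⟩ := hne
    simp only [Finset.mem_compl, Finset.mem_insert, Finset.mem_singleton] at hσ
    push_neg at hσ
    exact ⟨σ, hσ⟩
  -- torsion values at x
  have P1 : Γ σ μ σ x - Γ σ σ μ x = -(ω μ x) := by
    have := hSAP x hx σ μ σ; simpa [hσμ] using this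
  have P2 : Γ σ σ ν x - Γ σ ν σ x = ω ν x := by
    have := hSAP x hx σ σ ν; simpa [hσν] using this
  have P3 : Γ σ ν μ x - Γ σ μ ν x = 0 := by
    have := hSAP x hx σ ν μ; simpa [hσμ, hσν] using this
  -- derivatives of torsion components
  have E : ∀ (a b c : Fin n) (T : (Fin n → ℝ) → ℝ),
      ((fun y => Γ σ a b y - Γ σ b a y) =ᶠ[nhds x] T) →
      pd (Γ σ a b) c x - pd (Γ σ b a) c x = pd T c x := by
    intro a b c T hT
    rw [← pd_sub (hdiffΓat σ a b) (hdiffΓat σ b a), pd_congr_nhds hT]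
  have E1 : pd (Γ σ μ ν) σ x - pd (Γ σ ν μ) σ x = 0 := by
    rw [E μ ν σ (fun _ => (0:ℝ)) ?_, pd_const]
    filter_upwards [hmem] with y hy
    have := hSAP y hy σ μ ν; simpa [hσμ, hσν] using this
  have E2 : pd (Γ σ ν σ) μ x - pd (Γ σ σ ν) μ x = -(pd (ω ν) μ x) := by
    rw [E ν σ μ (fun y => -(ω ν y)) ?_, pd_neg]
    filter_upwards [hmem] with y hy
    have := hSAP y hy σ ν σ; simpa [hσν] using this
  have E3 : pd (Γ σ σ μ) ν x - pd (Γ σ μ σ) ν x = pd (ω μ) ν x := by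
    rw [E σ μ ν (ω μ) ?_]
    filter_upwards [hmem] with y hy
    have := hSAP y hy σ σ μ; simpa [hσμ] using this
  -- quadratic torsion contractions
  have Q : ∀ a b c : Fin n, ∑ ε, Γ σ ε a x * Γ ε b c x - ∑ ε, Γ σ ε a x * Γ ε c b x
      = Γ σ b a x * ω c x - Γ σ c a x * ω b x := by
    intro a b c
    rw [← Finset.sum_sub_distrib]
    have h : ∀ ε, Γ σ ε a x * Γ ε b c x - Γ σ ε a x * Γ ε c b x
        = Γ σ ε a x * ((if ε = b then ω c x else 0) - (if ε = c then ω b x else 0)) := by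
      intro ε; rw [← hSAP x hx ε b c]; ring
    simp only [h, mul_sub, Finset.sum_sub_distrib, mul_ite, mul_zero]
    simp [Finset.sum_ite_eq']
  have Q1 := Q σ μ ν
  have Q2 := Q μ ν σ
  have Q3 := Q ν σ μ
  have PQ1 : Γ σ μ σ x * ω ν x - Γ σ σ μ x * ω ν x = -(ω μ x * ω ν x) := by
    linear_combination ω ν x * P1
  have PQ2 : Γ σ σ ν x * ω μ x - Γ σ ν σ x * ω μ x = ω μ x * ω ν x := by
    linear_combination ω μ x * P2
  have PQ3 : Γ σ ν μ x * ω σ x - Γ σ μ ν x * ω σ x = 0 := by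
    linear_combination ω σ x * P3
  have K1 := K σ μ ν σ
  have K2 := K σ ν σ μ
  have K3 := K σ σ μ ν
  have hdω : pd (ω μ) ν x = pd (ω ν) μ x := by
    linarith [K1, K2, K3, E1, E2, E3, Q1, Q2, Q3, PQ1, PQ2, PQ3]
  -- the torsion contraction with ω vanishes
  have hsum : ∑ ε, Γ ε μ ν x * ω ε x - ∑ ε, Γ ε ν μ x * ω ε x
      = ω ν x * ω μ x - ω μ x * ω ν x := by
    rw [← Finset.sum_sub_distrib]
    have h : ∀ ε, Γ ε μ ν x * ω ε x - Γ ε ν μ x * ω ε x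
        = ((if ε = μ then ω ν x else 0) - (if ε = ν then ω μ x else 0)) * ω ε x := by
      intro ε; rw [← hSAP x hx ε μ ν]; ring
    simp only [h, sub_mul, Finset.sum_sub_distrib, ite_mul, zero_mul]
    simp [Finset.sum_ite_eq']
  linear_combination hdω - hsum
end

section
/- In an SAP-space the cosmological function is Λ = (3/2)(n − 1) ω²: with σ_{μν} := Σ_{σ,α} γ^σ_{αμ} γ^α_{σν}, ω_{μν} := Σ_{σ,α} γ^σ_{μα} γ^α_{νσ}, σ := Σ_{μ,ν} g^{μν} σ_{μν} and ωˢ := Σ_{μ,ν} g^{μν} ω_{μν}, one has (1/2)(σ − ωˢ) = (3/2)(n − 1) ω². In particular the cosmological function is nonnegative and vanishes only where ω does (for g positive definite). -/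
open scoped BigOperators

/-- In an SAP-space the cosmological function is Λ = (3/2)(n − 1) ω²:
with σ_{μν} := Σ_{σ,α} γ^σ_{αμ} γ^α_{σν}, ω_{μν} := Σ_{σ,α} γ^σ_{μα} γ^α_{νσ},
σ := Σ g^{μν} σ_{μν} and ωˢ := Σ g^{μν} ω_{μν}, one has
(1/2)(σ − ωˢ) = (3/2)(n − 1) ω².  For g positive definite the cosmological function is
nonnegative and vanishes only where ω does. -/
theorem sap_cosmological_function
    (n : ℕ) (hn : 2 ≤ n)
    (g ginv : Fin n → Fin n → ℝ)
    (hg_symm : ∀ μ ν, g μ ν = g ν μ)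
    (hginv : ∀ μ ν, (∑ σ, g μ σ * ginv σ ν) = if μ = ν then (1:ℝ) else 0)
    (ω : Fin n → ℝ)
    (γ : Fin n → Fin n → Fin n → ℝ)
    (hγ : ∀ α μ ν, γ α μ ν = (if α = μ then ω ν else 0) - g μ ν * (∑ β, ginv α β * ω β))
    (sigma omegaScalar omegaSq : ℝ)
    (hsigma : sigma = ∑ μ, ∑ ν, ginv μ ν * (∑ σ, ∑ α, γ σ α μ * γ α σ ν))
    (homegaScalar : omegaScalar = ∑ μ, ∑ ν, ginv μ ν * (∑ σ, ∑ α, γ σ μ α * γ α ν σ))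
    (homegaSq : omegaSq = ∑ μ, ∑ ν, ginv μ ν * ω μ * ω ν) :
    (1/2) * (sigma - omegaScalar) = (3/2) * ((n : ℝ) - 1) * omegaSq ∧
    ((∀ v : Fin n → ℝ, v ≠ 0 → 0 < ∑ μ, ∑ ν, g μ ν * v μ * v ν) →
      0 ≤ (3/2) * ((n : ℝ) - 1) * omegaSq ∧
      ((3/2) * ((n : ℝ) - 1) * omegaSq = 0 ↔ ω = 0)) := by
  set W : Fin n → ℝ := fun σ => ∑ β, ginv σ β * ω β with hW
  have hWd : ∀ σ, (∑ β, ginv σ β * ω β) = W σ := fun σ => rfl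
  -- ginv is also a left inverse of g
  have h1 : ∀ μ ν, (∑ σ, ginv μ σ * g σ ν) = if μ = ν then (1:ℝ) else 0 := by
    have hmul : (Matrix.of g) * (Matrix.of ginv) = 1 := by
      ext μ ν
      simpa [Matrix.mul_apply, Matrix.one_apply] using hginv μ ν
    have hmul' := mul_eq_one_comm.mp hmul
    intro μ ν
    have h2 := congrArg (fun M => M μ ν) hmul'
    simpa [Matrix.mul_apply, Matrix.one_apply] using h2
  -- lowering W gives back ω
  have hA2 : ∀ μ, (∑ α, g μ α * W α) = ω μ := by
    intro μ
    have e : (∑ α, g μ α * W α) = ∑ β, (∑ α, g μ α * ginv α β) * ω β := by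
      simp only [← hWd, Finset.mul_sum, Finset.sum_mul]
      rw [Finset.sum_comm]
      exact Finset.sum_congr rfl fun β _ => Finset.sum_congr rfl fun α _ => by ring
    rw [e]
    simp [hginv]
  have hA : ∀ μ, (∑ α, g α μ * W α) = ω μ := by
    intro μ
    rw [← hA2 μ]
    exact Finset.sum_congr rfl fun α _ => by rw [hg_symm]
  -- ω² as pairing of ω with W
  have hQ : (∑ α, ω α * W α) = omegaSq := by
    rw [homegaSq]
    simp only [← hWd, Finset.mul_sum]
    exact Finset.sum_congr rfl fun α _ => Finset.sum_congr rfl fun β _ => by ring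
  -- trace of ginv * g
  have htr : (∑ μ, ∑ ν, ginv μ ν * g μ ν) = (n : ℝ) := by
    have e : ∀ μ : Fin n, (∑ ν, ginv μ ν * g μ ν) = 1 := by
      intro μ
      have h2 : (∑ σ, ginv μ σ * g σ μ) = 1 := by simpa using h1 μ μ
      rw [← h2]
      exact Finset.sum_congr rfl fun ν _ => by rw [hg_symm]
    simp [e]
  -- σ_{μν} = (n-1) ω_μ ω_ν
  have hS : ∀ μ ν, (∑ σ : Fin n, ∑ α, γ σ α μ * γ α σ ν) = ((n:ℝ) - 1) * (ω μ * ω ν) := by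
    intro μ ν
    have inner : ∀ σ, (∑ α, γ σ α μ * γ α σ ν) = ω μ * ω ν - g σ μ * W σ * ω ν := by
      intro σ
      have e : ∀ α, γ σ α μ * γ α σ ν =
          (if σ = α then ω μ * ω ν - ω μ * (g σ ν * W α) - g α μ * W σ * ω ν else 0)
          + (g α μ * W σ) * (g σ ν * W α) := by
        intro α
        rcases eq_or_ne σ α with h | h
        · subst h
          rw [hγ, hγ]
          simp only [hWd, eq_self_iff_true, if_true]
          ring
        · rw [hγ, hγ]
          simp only [if_neg h, if_neg (Ne.symm h), hWd]
          ring
      rw [Finset.sum_congr rfl fun α _ => e α, Finset.sum_add_distrib]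
      have p1 : (∑ α, if σ = α then ω μ * ω ν - ω μ * (g σ ν * W α) - g α μ * W σ * ω ν else 0)
          = ω μ * ω ν - ω μ * (g σ ν * W σ) - g σ μ * W σ * ω ν := by
        rw [Finset.sum_ite_eq]
        simp
      have p2 : (∑ α, (g α μ * W σ) * (g σ ν * W α)) = W σ * g σ ν * ω μ := by
        have e2 : ∀ α, (g α μ * W σ) * (g σ ν * W α) = (W σ * g σ ν) * (g α μ * W α) :=
          fun α => by ring
        rw [Finset.sum_congr rfl fun α _ => e2 α, ← Finset.mul_sum, hA]
      rw [p1, p2]; ring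
    rw [Finset.sum_congr rfl fun σ _ => inner σ, Finset.sum_sub_distrib]
    have q1 : (∑ _σ : Fin n, ω μ * ω ν) = (n : ℝ) * (ω μ * ω ν) := by
      simp [Finset.sum_const, Finset.card_univ, nsmul_eq_mul]
    have q2 : (∑ σ, g σ μ * W σ * ω ν) = ω μ * ω ν := by
      have e3 : ∀ σ, g σ μ * W σ * ω ν = (g σ μ * W σ) * ω ν := fun σ => by ring
      rw [Finset.sum_congr rfl fun σ _ => e3 σ, ← Finset.sum_mul, hA]
    rw [q1, q2]; ring
  -- the ω_{μν} double sum
  have hT : ∀ μ ν, (∑ σ : Fin n, ∑ α, γ σ μ α * γ α ν σ)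
      = 2 * (ω μ * ω ν) - 2 * g μ ν * (∑ α, ω α * W α) := by
    intro μ ν
    have inner : ∀ σ, (∑ α, γ σ μ α * γ α ν σ)
        = (if σ = μ then ω ν * ω σ - g ν σ * (∑ α, ω α * W α) else 0)
          - g μ ν * (W σ * ω σ) + ω μ * (g ν σ * W σ) := by
      intro σ
      rcases eq_or_ne σ μ with h | h
      · have e : ∀ α, γ σ μ α * γ α ν σ =
            (if α = ν then ω α * ω σ - g μ α * W σ * ω σ else 0)
            - ω α * (g ν σ * W α) + (g μ α * W α) * (g ν σ * W σ) := by
          intro α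
          rw [hγ, hγ]
          simp only [if_pos h, hWd]
          rcases eq_or_ne α ν with h2 | h2
          · simp only [if_pos h2]; ring
          · simp only [if_neg h2]; ring
        rw [Finset.sum_congr rfl fun α _ => e α, Finset.sum_add_distrib,
          Finset.sum_sub_distrib, if_pos h]
        have p1 : (∑ α, if α = ν then ω α * ω σ - g μ α * W σ * ω σ else 0)
            = ω ν * ω σ - g μ ν * W σ * ω σ := by
          rw [Finset.sum_ite_eq']
          simp
        have p2 : (∑ α, ω α * (g ν σ * W α)) = g ν σ * (∑ α, ω α * W α) := by
          rw [Finset.mul_sum]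
          exact Finset.sum_congr rfl fun α _ => by ring
        have p3 : (∑ α, (g μ α * W α) * (g ν σ * W σ)) = ω μ * (g ν σ * W σ) := by
          rw [← Finset.sum_mul, hA2]
        rw [p1, p2, p3]; ring
      · have e : ∀ α, γ σ μ α * γ α ν σ =
            -(if α = ν then g μ α * W σ * ω σ else 0) + (g μ α * W α) * (g ν σ * W σ) := by
          intro α
          rw [hγ, hγ]
          simp only [if_neg h, hWd]
          rcases eq_or_ne α ν with h2 | h2
          · simp only [if_pos h2]; ring
          · simp only [if_neg h2]; ring
        rw [Finset.sum_congr rfl fun α _ => e α, Finset.sum_add_distrib, if_neg h]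
        have p1 : (∑ α, -(if α = ν then g μ α * W σ * ω σ else 0))
            = -(g μ ν * W σ * ω σ) := by
          rw [Finset.sum_neg_distrib, Finset.sum_ite_eq']
          simp
        have p3 : (∑ α, (g μ α * W α) * (g ν σ * W σ)) = ω μ * (g ν σ * W σ) := by
          rw [← Finset.sum_mul, hA2]
        rw [p1, p3]; ring
    rw [Finset.sum_congr rfl fun σ _ => inner σ, Finset.sum_add_distrib,
      Finset.sum_sub_distrib]
    have q1 : (∑ σ, if σ = μ then ω ν * ω σ - g ν σ * (∑ α, ω α * W α) else 0)
        = ω ν * ω μ - g ν μ * (∑ α, ω α * W α) := by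
      rw [Finset.sum_ite_eq']
      simp
    have q2 : (∑ σ, g μ ν * (W σ * ω σ)) = g μ ν * (∑ α, ω α * W α) := by
      rw [← Finset.mul_sum]
      congr 1
      exact Finset.sum_congr rfl fun σ _ => by ring
    have q3 : (∑ σ, ω μ * (g ν σ * W σ)) = ω μ * ω ν := by
      rw [← Finset.mul_sum, hA2]
    rw [q1, q2, q3, hg_symm ν μ]; ring
  -- the two scalars
  have key1 : sigma = ((n:ℝ) - 1) * omegaSq := by
    rw [hsigma, homegaSq, Finset.mul_sum]
    refine Finset.sum_congr rfl fun μ _ => ?_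
    rw [Finset.mul_sum]
    refine Finset.sum_congr rfl fun ν _ => ?_
    rw [hS]; ring
  have key2 : omegaScalar = (2 - 2 * (n:ℝ)) * omegaSq := by
    have e : (∑ μ, ∑ ν, ginv μ ν * (∑ σ, ∑ α, γ σ μ α * γ α ν σ))
        = 2 * (∑ μ, ∑ ν, ginv μ ν * ω μ * ω ν)
          - 2 * (∑ α, ω α * W α) * (∑ μ, ∑ ν, ginv μ ν * g μ ν) := by
      have e2 : ∀ μ ν, ginv μ ν * (∑ σ, ∑ α, γ σ μ α * γ α ν σ)
          = 2 * (ginv μ ν * ω μ * ω ν) - (2 * (∑ α, ω α * W α)) * (ginv μ ν * g μ ν) := by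
        intro μ ν; rw [hT]; ring
      rw [Finset.sum_congr rfl fun μ _ => Finset.sum_congr rfl fun ν _ => e2 μ ν]
      simp only [Finset.sum_sub_distrib, ← Finset.mul_sum]
    rw [homegaScalar, e, htr, hQ, ← homegaSq]; ring
  constructor
  · rw [key1, key2]; ring
  · intro hpos
    -- ω² is the quadratic form of g evaluated at W
    have hform : omegaSq = ∑ μ, ∑ ν, g μ ν * W μ * W ν := by
      rw [← hQ]
      have e : ∀ ν, (∑ μ, g μ ν * W μ * W ν) = ω ν * W ν := by
        intro ν
        have e2 : ∀ μ, g μ ν * W μ * W ν = (g μ ν * W μ) * W ν := fun μ => by ring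
        rw [Finset.sum_congr rfl fun μ _ => e2 μ, ← Finset.sum_mul, hA]
      rw [Finset.sum_comm]
      exact (Finset.sum_congr rfl fun ν _ => e ν).symm
    have hWzero_iff : W = 0 ↔ ω = 0 := by
      constructor
      · intro h
        funext μ
        have := hA μ
        simp [h] at this
        simpa using this.symm
      · intro h
        funext σ
        simp [hW, h]
    have hsq_nonneg : 0 ≤ omegaSq := by
      rcases eq_or_ne W 0 with h | h
      · rw [hform, h]; simp
      · have := hpos W h
        rw [hform]
        exact le_of_lt this
    have hsq_iff : omegaSq = 0 ↔ ω = 0 := by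
      constructor
      · intro h
        by_contra hω
        have hWne : W ≠ 0 := fun hw => hω (hWzero_iff.mp hw)
        have := hpos W hWne
        rw [← hform] at this
        linarith
      · intro h
        rw [hform, hWzero_iff.mpr h]
        simp
    have hc : (0:ℝ) < (3/2) * ((n:ℝ) - 1) := by
      have h2 : (2:ℝ) ≤ (n:ℝ) := by exact_mod_cast hn
      linarith
    refine ⟨mul_nonneg (le_of_lt hc) hsq_nonneg, ?_, ?_⟩
    · intro h
      rcases mul_eq_zero.mp h with h2 | h2
      · exact absurd h2 (ne_of_gt hc)
      · exact hsq_iff.mp h2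
    · intro h
      rw [hsq_iff.mpr h, mul_zero]
end

section
/- (Lemma 1(d) of the paper.) Let n ≥ 3 and treat the frame values A = (A_{iβ}) and the frame-derivative values B = (B_{iβγ}) as independent variables. At any pair (A, B) with A invertible which is semi-symmetric (i.e. Γ^α_{μν} − Γ^α_{νμ} = δ^α_μ ω_ν − δ^α_ν ω_μ, where Γ^α_{μν} := Σ_i λ_i^α B_{iμν}), the partial derivative of ω² with respect to the entry A_{iβ}, holding B fixed, equals (2/(1 − n)) [ λ_i^β ω² + (n − 2) (Σ_α λ_i^α ω_α) ω^β ]. -/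
/-!
Since `g⁻¹ = λ λᵀ`, the square `ω²` is the sum of squares of the coframe components
`ω_j = λ_j^μ ω_μ`. Moving `A_{iβ}` moves `λ_j^α` at rate `-λ_i^α λ_j^β` (the derivative
`-X⁻¹ H X⁻¹` of matrix inversion), hence `ω_μ` at rate
`-(1/(1-n)) λ_i^α (Γ^β_{μα} - Γ^β_{αμ})`, and semi-symmetry turns this torsion contraction into
`δ^β_μ ω_i - λ_i^β ω_μ`. Collecting the terms of `Σ_j 2 ω_j ∂ω_j` gives the formula.
-/

open scoped BigOperators

/-- The inverse-frame components λ_i^α of a frame matrix `A` (so that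
Σ_i λ_i^α A_{iν} = δ^α_ν when `A` is invertible). -/
noncomputable def lamUp {n : ℕ} (A : Fin n → Fin n → ℝ) (i α : Fin n) : ℝ :=
  (Matrix.of A)⁻¹ α i

/-- The metric g_{μν} = Σ_i A_{iμ} A_{iν} built from the frame matrix `A`. -/
noncomputable def gOf {n : ℕ} (A : Fin n → Fin n → ℝ) : Matrix (Fin n) (Fin n) ℝ :=
  Matrix.of fun μ ν => ∑ i, A i μ * A i ν

/-- ω_μ(A,B) = (1/(1−n)) Σ_{i,α} λ_i^α (B_{iμα} − B_{iαμ}), with the frame values `A`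
and the frame-derivative values `B` treated as independent variables. -/
noncomputable def omegaOf {n : ℕ}
    (p : (Fin n → Fin n → ℝ) × (Fin n → Fin n → Fin n → ℝ)) (μ : Fin n) : ℝ :=
  (1 / (1 - (n : ℝ))) * ∑ i, ∑ α, lamUp p.1 i α * (p.2 i μ α - p.2 i α μ)

/-- ω^β(A,B) = Σ_α g^{βα} ω_α. -/
noncomputable def omegaUpOf {n : ℕ}
    (p : (Fin n → Fin n → ℝ) × (Fin n → Fin n → Fin n → ℝ)) (β : Fin n) : ℝ :=
  ∑ α, (gOf p.1)⁻¹ β α * omegaOf p α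

/-- ω²(A,B) = Σ_{μ,ν} g^{μν} ω_μ ω_ν. -/
noncomputable def omegaSqOf {n : ℕ}
    (p : (Fin n → Fin n → ℝ) × (Fin n → Fin n → Fin n → ℝ)) : ℝ :=
  ∑ μ, ∑ ν, (gOf p.1)⁻¹ μ ν * omegaOf p μ * omegaOf p ν

/-- The connection values Γ^α_{μν}(A,B) = Σ_i λ_i^α B_{iμν}. -/
noncomputable def GammaOf {n : ℕ}
    (p : (Fin n → Fin n → ℝ) × (Fin n → Fin n → Fin n → ℝ)) (α μ ν : Fin n) : ℝ :=
  ∑ i, lamUp p.1 i α * p.2 i μ ν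

open Matrix

section MatrixInverse

variable {𝕜 : Type*} [NontriviallyNormedField 𝕜] [CompleteSpace 𝕜]
  {m : Type*} [Fintype m] [DecidableEq m]

theorem exists_hasFDerivAt_matrix_inv_apply (X : m → m → 𝕜) (hX : IsUnit (of X).det) (a b : m) :
    ∃ L : (m → m → 𝕜) →L[𝕜] 𝕜, HasFDerivAt (fun Y : m → m → 𝕜 => (of Y)⁻¹ a b) L X ∧
      ∀ H, L H = -((of X)⁻¹ * of H * (of X)⁻¹) a b := by
  -- Differentiate `Ring.inverse` in the Banach algebra of matrices with the `L∞`-operator norm;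
  -- its topology is the entrywise one, so `of` and the entry maps are continuous linear.
  let _ : NormedRing (Matrix m m 𝕜) := Matrix.linftyOpNormedRing
  let _ : NormedAlgebra 𝕜 (Matrix m m 𝕜) := Matrix.linftyOpNormedAlgebra
  -- instance search does not find completeness for this locally chosen norm
  have : HasSummableGeomSeries (Matrix m m 𝕜) :=
    @instHasSummableGeomSeriesOfCompleteSpace _ _ (FiniteDimensional.complete 𝕜 _)
  let ofL : (m → m → 𝕜) →L[𝕜] Matrix m m 𝕜 :=
    LinearMap.toContinuousLinearMap (ofLinearEquiv 𝕜).toLinearMap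
  let entryL : Matrix m m 𝕜 →L[𝕜] 𝕜 := LinearMap.toContinuousLinearMap (entryLinearMap 𝕜 𝕜 a b)
  obtain ⟨u, hu⟩ := (isUnit_iff_isUnit_det _).mpr hX
  have hinv := hasFDerivAt_ringInverse (𝕜 := 𝕜) u
  have hu_inv : (↑u⁻¹ : Matrix m m 𝕜) = (of X)⁻¹ := by rw [← hu, coe_units_inv]
  rw [hu, hu_inv] at hinv
  refine ⟨entryL.comp ((-ContinuousLinearMap.mulLeftRight 𝕜 _ (of X)⁻¹ (of X)⁻¹).comp ofL), ?_,
    fun H => rfl⟩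
  have hfun : (fun Y : m → m → 𝕜 => (of Y)⁻¹ a b) = entryL ∘ Ring.inverse ∘ ofL := by
    ext Y
    simp [ofL, entryL, nonsing_inv_eq_ringInverse]
  rw [hfun]
  exact entryL.hasFDerivAt.comp X (hinv.comp X ofL.hasFDerivAt)

theorem differentiableAt_matrix_inv_apply {X : m → m → 𝕜} (hX : IsUnit (of X).det) (a b : m) :
    DifferentiableAt 𝕜 (fun Y : m → m → 𝕜 => (of Y)⁻¹ a b) X :=
  let ⟨_, hL, _⟩ := exists_hasFDerivAt_matrix_inv_apply X hX a b
  hL.differentiableAt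

theorem hasLineDerivAt_matrix_inv_apply {X : m → m → 𝕜} (hX : IsUnit (of X).det)
    (H : m → m → 𝕜) (a b : m) :
    HasLineDerivAt 𝕜 (fun Y : m → m → 𝕜 => (of Y)⁻¹ a b)
      (-((of X)⁻¹ * of H * (of X)⁻¹) a b) X H := by
  obtain ⟨L, hL, hLH⟩ := exists_hasFDerivAt_matrix_inv_apply X hX a b
  rw [← hLH]
  exact hL.hasLineDerivAt H

end MatrixInverse

abbrev FrameData (n : ℕ) := (Fin n → Fin n → ℝ) × (Fin n → Fin n → Fin n → ℝ)

variable {n : ℕ}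

noncomputable def omegaFrameOf (p : FrameData n) (j : Fin n) : ℝ :=
  ∑ μ, lamUp p.1 j μ * omegaOf p μ

def IsSemiSymmetric (p : FrameData n) : Prop :=
  ∀ α μ ν, GammaOf p α μ ν - GammaOf p α ν μ
    = (if α = μ then omegaOf p ν else 0) - (if α = ν then omegaOf p μ else 0)

def elemMatrix (i β : Fin n) : Fin n → Fin n → ℝ :=
  fun i' β' => if i' = i ∧ β' = β then 1 else 0

theorem inv_gOf_apply (A : Fin n → Fin n → ℝ) (μ ν : Fin n) :
    (gOf A)⁻¹ μ ν = ∑ j, lamUp A j μ * lamUp A j ν := by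
  have hg : gOf A = (of A)ᵀ * of A := by
    ext μ ν
    simp [gOf, mul_apply]
  rw [hg, Matrix.mul_inv_rev, ← transpose_nonsing_inv, mul_apply]
  rfl

theorem omegaSqOf_eq_sum_sq (p : FrameData n) : omegaSqOf p = ∑ j, omegaFrameOf p j ^ 2 := by
  simp only [omegaSqOf, omegaFrameOf, sq, Finset.sum_mul_sum]
  symm
  rw [Finset.sum_comm]
  refine Finset.sum_congr rfl fun μ _ => ?_
  rw [Finset.sum_comm]
  refine Finset.sum_congr rfl fun ν _ => ?_
  rw [inv_gOf_apply, Finset.sum_mul, Finset.sum_mul]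
  exact Finset.sum_congr rfl fun j _ => by ring

theorem omegaUpOf_eq_sum (p : FrameData n) (β : Fin n) :
    omegaUpOf p β = ∑ j, lamUp p.1 j β * omegaFrameOf p j := by
  simp only [omegaUpOf, omegaFrameOf, inv_gOf_apply, Finset.mul_sum, Finset.sum_mul]
  rw [Finset.sum_comm]
  exact Finset.sum_congr rfl fun j _ => Finset.sum_congr rfl fun α _ => by ring

section Differentiability

variable {p : FrameData n}

theorem differentiableAt_lamUp (hp : IsUnit (of p.1).det) (j α : Fin n) :
    DifferentiableAt ℝ (fun q : FrameData n => lamUp q.1 j α) p :=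
  (differentiableAt_matrix_inv_apply hp α j).comp p differentiableAt_fst

theorem differentiableAt_omegaOf (hp : IsUnit (of p.1).det) (μ : Fin n) :
    DifferentiableAt ℝ (fun q : FrameData n => omegaOf q μ) p := by
  unfold omegaOf
  refine .const_mul (.fun_sum fun j _ => .fun_sum fun α _ => ?_) _
  exact (differentiableAt_lamUp hp j α).mul (by fun_prop)

theorem differentiableAt_omegaSqOf (hp : IsUnit (of p.1).det) :
    DifferentiableAt ℝ (omegaSqOf (n := n)) p := by
  rw [funext omegaSqOf_eq_sum_sq]
  refine .fun_sum fun j _ => .pow (.fun_sum fun μ _ => ?_) 2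
  exact (differentiableAt_lamUp hp j μ).mul (differentiableAt_omegaOf hp μ)

end Differentiability

theorem sum_lamUp_mul_GammaOf_sub_of_isSemiSymmetric {p : FrameData n} (hss : IsSemiSymmetric p)
    (i β μ : Fin n) :
    ∑ α, lamUp p.1 i α * (GammaOf p β μ α - GammaOf p β α μ)
      = (if β = μ then omegaFrameOf p i else 0) - lamUp p.1 i β * omegaOf p μ := by
  simp only [hss β μ]
  simp [mul_sub, Finset.sum_sub_distrib, mul_ite, omegaFrameOf]

section Variation

variable {A : Fin n → Fin n → ℝ} (B : Fin n → Fin n → Fin n → ℝ) (i β : Fin n)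

theorem hasDerivAt_lamUp_add_smul_elemMatrix (hA : IsUnit (of A).det) (j α : Fin n) :
    HasDerivAt (fun t : ℝ => lamUp (A + t • elemMatrix i β) j α)
      (-(lamUp A i α * lamUp A j β)) 0 := by
  have hval : ((of A)⁻¹ * of (elemMatrix i β) * (of A)⁻¹) α j = lamUp A i α * lamUp A j β := by
    simp [mul_apply, elemMatrix, lamUp, ite_and, Finset.sum_ite_eq']
  have h := hasLineDerivAt_matrix_inv_apply hA (elemMatrix i β) α j
  rw [hval] at h
  exact h

theorem hasDerivAt_omegaOf_add_smul_elemMatrix (hA : IsUnit (of A).det) (μ : Fin n) :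
    HasDerivAt (fun t : ℝ => omegaOf (A + t • elemMatrix i β, B) μ)
      (-(1 / (1 - (n : ℝ)) *
        ∑ α, lamUp A i α * (GammaOf (A, B) β μ α - GammaOf (A, B) β α μ))) 0 := by
  unfold omegaOf
  dsimp only
  refine (HasDerivAt.const_mul _ (.fun_sum fun j _ => .fun_sum fun α _ =>
    (hasDerivAt_lamUp_add_smul_elemMatrix i β hA j α).mul_const _)).congr_deriv ?_
  rw [← mul_neg]
  congr 1
  rw [Finset.sum_comm, ← Finset.sum_neg_distrib]
  refine Finset.sum_congr rfl fun α _ => ?_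
  rw [GammaOf, GammaOf, ← Finset.sum_sub_distrib, Finset.mul_sum, ← Finset.sum_neg_distrib]
  exact Finset.sum_congr rfl fun j _ => by ring

theorem hasDerivAt_omegaFrameOf_add_smul_elemMatrix (hA : IsUnit (of A).det)
    (hss : IsSemiSymmetric (A, B)) (j : Fin n) :
    HasDerivAt (fun t : ℝ => omegaFrameOf (A + t • elemMatrix i β, B) j)
      (-(lamUp A j β * omegaFrameOf (A, B) i) - 1 / (1 - (n : ℝ)) *
        (lamUp A j β * omegaFrameOf (A, B) i - lamUp A i β * omegaFrameOf (A, B) j)) 0 := by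
  show HasDerivAt (fun t : ℝ => ∑ μ, lamUp (A + t • elemMatrix i β) j μ *
    omegaOf (A + t • elemMatrix i β, B) μ) _ 0
  refine (HasDerivAt.fun_sum fun μ _ => (hasDerivAt_lamUp_add_smul_elemMatrix i β hA j μ).mul
    (hasDerivAt_omegaOf_add_smul_elemMatrix B i β hA μ)).congr_deriv ?_
  simp only [zero_smul, add_zero, sum_lamUp_mul_GammaOf_sub_of_isSemiSymmetric hss,
    Finset.sum_add_distrib]
  have lamVariation : ∑ μ, -(lamUp A i μ * lamUp A j β) * omegaOf (A, B) μ
      = -(lamUp A j β * omegaFrameOf (A, B) i) := by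
    rw [omegaFrameOf, Finset.mul_sum, ← Finset.sum_neg_distrib]
    exact Finset.sum_congr rfl fun μ _ => by ring
  have omegaVariation : ∑ μ, lamUp A j μ * -(1 / (1 - (n : ℝ)) *
        ((if β = μ then omegaFrameOf (A, B) i else 0) - lamUp A i β * omegaOf (A, B) μ))
      = -(1 / (1 - (n : ℝ)) *
        (lamUp A j β * omegaFrameOf (A, B) i - lamUp A i β * omegaFrameOf (A, B) j)) := by
    simp only [mul_neg, mul_sub, mul_ite, mul_zero, Finset.sum_neg_distrib, Finset.sum_sub_distrib,
      Finset.sum_ite_eq, Finset.mem_univ, if_true, omegaFrameOf, Finset.mul_sum]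
    congr 2 <;> exact Finset.sum_congr rfl fun _ _ => by ring
  rw [lamVariation, omegaVariation]
  ring

theorem hasDerivAt_omegaSqOf_add_smul_elemMatrix (hA : IsUnit (of A).det)
    (hss : IsSemiSymmetric (A, B)) (hn : (n : ℝ) ≠ 1) :
    HasDerivAt (fun t : ℝ => omegaSqOf (A + t • elemMatrix i β, B))
      (2 / (1 - (n : ℝ)) * (lamUp A i β * omegaSqOf (A, B)
        + ((n : ℝ) - 2) * omegaFrameOf (A, B) i * omegaUpOf (A, B) β)) 0 := by
  simp only [omegaSqOf_eq_sum_sq]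
  refine (HasDerivAt.fun_sum fun j _ =>
    (hasDerivAt_omegaFrameOf_add_smul_elemMatrix B i β hA hss j).pow 2).congr_deriv ?_
  have hn' : 1 - (n : ℝ) ≠ 0 := sub_ne_zero.mpr hn.symm
  have summand : ∀ j, ((2 : ℕ) : ℝ) * omegaFrameOf (A + (0 : ℝ) • elemMatrix i β, B) j ^ (2 - 1) *
      (-(lamUp A j β * omegaFrameOf (A, B) i) - 1 / (1 - (n : ℝ)) *
        (lamUp A j β * omegaFrameOf (A, B) i - lamUp A i β * omegaFrameOf (A, B) j))
      = 2 / (1 - (n : ℝ)) * (lamUp A i β * omegaFrameOf (A, B) j ^ 2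
        + ((n : ℝ) - 2) * omegaFrameOf (A, B) i * (lamUp A j β * omegaFrameOf (A, B) j)) := by
    intro j
    rw [zero_smul, add_zero]
    field_simp
    ring
  rw [Finset.sum_congr rfl fun j _ => summand j, ← Finset.mul_sum, Finset.sum_add_distrib,
    ← Finset.mul_sum, ← Finset.mul_sum, omegaUpOf_eq_sum]

end Variation

/-- (Lemma 1(d) of the paper.) At a semi-symmetric pair (A,B) with A invertible,
∂ω²/∂A_{iβ} = (2/(1 − n)) [ λ_i^β ω² + (n − 2)(Σ_α λ_i^α ω_α) ω^β ]. -/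
theorem sap_lemma1d
    (n : ℕ) (hn : 3 ≤ n)
    (A : Fin n → Fin n → ℝ) (B : Fin n → Fin n → Fin n → ℝ)
    (hA : IsUnit (Matrix.of A).det)
    (hss : ∀ α μ ν, GammaOf (A, B) α μ ν - GammaOf (A, B) α ν μ
      = (if α = μ then omegaOf (A, B) ν else 0) - (if α = ν then omegaOf (A, B) μ else 0))
    (i β : Fin n) :
    fderiv ℝ (fun p : (Fin n → Fin n → ℝ) × (Fin n → Fin n → Fin n → ℝ) => omegaSqOf p)
        (A, B) (fun i' β' => if i' = i ∧ β' = β then (1:ℝ) else 0, 0)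
      = (2 / (1 - (n : ℝ))) *
          (lamUp A i β * omegaSqOf (A, B)
            + ((n : ℝ) - 2) * (∑ α, lamUp A i α * omegaOf (A, B) α) * omegaUpOf (A, B) β) := by
  have hn1 : (n : ℝ) ≠ 1 := by norm_cast; omega
  have hcurve : (fun t : ℝ => omegaSqOf ((A, B) + t • (elemMatrix i β, 0)))
      = fun t => omegaSqOf (A + t • elemMatrix i β, B) := by
    ext t
    simp
  refine ((differentiableAt_omegaSqOf (p := (A, B)) hA).hasFDerivAt.hasLineDerivAt
    (elemMatrix i β, 0)).unique ?_
  unfold HasLineDerivAt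
  rw [hcurve]
  exact hasDerivAt_omegaSqOf_add_smul_elemMatrix B i β hA hss hn1
end

section
/- (Lemma 2(b) of the paper.) Let n ≥ 2 and let H(A,B) := (n − 1)(2 − n) det(A) ω²(A,B) be the reduced SGFT Lagrangian density. At any pair (A, B) with A invertible, the partial derivative of H with respect to B_{iβγ}, holding A fixed, equals 2(n − 2) det(A) [ λ_i^γ ω^β − λ_i^β ω^γ ]. -/
open scoped BigOperators

/-- The reduced SGFT Lagrangian density H(A,B) = (n − 1)(2 − n) det(A) ω²(A,B). -/
noncomputable def HOf {n : ℕ}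
    (p : (Fin n → Fin n → ℝ) × (Fin n → Fin n → Fin n → ℝ)) : ℝ :=
  ((n : ℝ) - 1) * (2 - (n : ℝ)) * (Matrix.of p.1).det * omegaSqOf p

/-! For fixed `A`, `ω(A, ·)` is linear in `B` and `g` does not involve `B`, so along the line
`B + t E` the density is `(n - 1)(2 - n) det A · q(ω + t δω)`, where `q` is the quadratic form of
the symmetric matrix `g⁻¹` and `δω = ω(A, E)`. Its derivative at `t = 0` is
`2 (n - 1)(2 - n) det A ⟨δω, g⁻¹ ω⟩`; for the elementary tensor `E` at `(i, β, γ)` one has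
`δω_μ = (δ_μ^β λ_i^γ - δ_μ^γ λ_i^β) / (1 - n)`, and `(n - 1)(2 - n) / (1 - n) = n - 2`.
Where `det A ≠ 0` the density is differentiable in `(A, B)` (Cramer's rule for `λ` and `g⁻¹`),
so its Fréchet derivative in the direction `(0, E)` is this line derivative. -/

open Finset Matrix

section
variable {𝕜 X ι : Type*} [NontriviallyNormedField 𝕜] [NormedAddCommGroup X] [NormedSpace 𝕜 X]
  [Fintype ι] [DecidableEq ι]

theorem DifferentiableAt.matrix_det {M : X → Matrix ι ι 𝕜} {x : X}
    (h : ∀ i j, DifferentiableAt 𝕜 (fun y => M y i j) x) :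
    DifferentiableAt 𝕜 (fun y => (M y).det) x := by
  simp only [det_apply']
  fun_prop

theorem DifferentiableAt.matrix_inv_apply {M : X → Matrix ι ι 𝕜} {x : X}
    (h : ∀ i j, DifferentiableAt 𝕜 (fun y => M y i j) x) (hdet : (M x).det ≠ 0) (i j : ι) :
    DifferentiableAt 𝕜 (fun y => (M y)⁻¹ i j) x := by
  simp only [Matrix.inv_def, Matrix.smul_apply, Ring.inverse_eq_inv, smul_eq_mul,
    adjugate_apply]
  refine ((matrix_det h).inv hdet).mul (matrix_det fun a b => ?_)
  rcases eq_or_ne a j with rfl | hne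
  · simp [updateRow_apply]
  · simpa [updateRow_apply, hne] using h a b

end

theorem Matrix.IsSymm.hasDerivAt_dotProduct_mulVec_line {ι : Type*} [Fintype ι]
    {G : Matrix ι ι ℝ} (hG : G.IsSymm) (w d : ι → ℝ) :
    HasDerivAt (fun t : ℝ => (w + t • d) ⬝ᵥ G *ᵥ (w + t • d)) (2 * (d ⬝ᵥ G *ᵥ w)) 0 := by
  have hsymm : w ⬝ᵥ G *ᵥ d = d ⬝ᵥ G *ᵥ w := by
    rw [dotProduct_mulVec, ← mulVec_transpose, hG.eq, dotProduct_comm]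
  have hexpand : ∀ t : ℝ, (w + t • d) ⬝ᵥ G *ᵥ (w + t • d)
      = w ⬝ᵥ G *ᵥ w + t * (2 * (d ⬝ᵥ G *ᵥ w)) + t ^ 2 * (d ⬝ᵥ G *ᵥ d) := by
    intro t
    simp only [mulVec_add, mulVec_smul, add_dotProduct, dotProduct_add, smul_dotProduct,
      dotProduct_smul, smul_eq_mul, hsymm]
    ring
  simp only [hexpand]
  simpa using (((hasDerivAt_id (0 : ℝ)).mul_const (2 * (d ⬝ᵥ G *ᵥ w))).const_add
    (w ⬝ᵥ G *ᵥ w)).fun_add ((hasDerivAt_pow 2 (0 : ℝ)).mul_const (d ⬝ᵥ G *ᵥ d))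

section
variable {n : ℕ}
local notation "P" => (Fin n → Fin n → ℝ) × (Fin n → Fin n → Fin n → ℝ)

theorem gOf_eq_transpose_mul (A : Fin n → Fin n → ℝ) : gOf A = (Matrix.of A)ᵀ * Matrix.of A := by
  ext a b
  simp [gOf, Matrix.mul_apply]

theorem isSymm_inv_gOf (A : Fin n → Fin n → ℝ) : ((gOf A)⁻¹).IsSymm := by
  rw [gOf_eq_transpose_mul]
  exact (isSymm_transpose_mul_self _).inv

theorem differentiableAt_HOf {A : Fin n → Fin n → ℝ} (hA : (Matrix.of A).det ≠ 0)
    (B : Fin n → Fin n → Fin n → ℝ) : DifferentiableAt ℝ HOf (A, B) := by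
  have hfrm : ∀ a b, DifferentiableAt ℝ (fun q : P => Matrix.of q.1 a b) (A, B) := by
    intro a b; simp only [of_apply]; fun_prop
  have hgOf : ∀ a b, DifferentiableAt ℝ (fun q : P => gOf q.1 a b) (A, B) := by
    intro a b; simp only [gOf, of_apply]; fun_prop
  have hdet_g : (gOf A).det ≠ 0 := by
    rw [gOf_eq_transpose_mul, det_mul, det_transpose]; exact mul_ne_zero hA hA
  have hginv := DifferentiableAt.matrix_inv_apply hgOf hdet_g
  have hlam : ∀ a b, DifferentiableAt ℝ (fun q : P => lamUp q.1 a b) (A, B) :=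
    fun a b => DifferentiableAt.matrix_inv_apply hfrm hA b a
  have homega : ∀ μ, DifferentiableAt ℝ (fun q : P => omegaOf q μ) (A, B) := by
    intro μ
    refine .const_mul (.fun_sum fun a _ => .fun_sum fun b _ => (hlam a b).mul ?_) _
    fun_prop
  have hdet := DifferentiableAt.matrix_det hfrm
  exact (hdet.const_mul _).mul
    (.fun_sum fun a _ => .fun_sum fun b _ => ((hginv a b).mul (homega a)).mul (homega b))

theorem omegaOf_add_smul (A : Fin n → Fin n → ℝ) (B E : Fin n → Fin n → Fin n → ℝ) (t : ℝ) :
    omegaOf (A, B + t • E) = omegaOf (A, B) + t • omegaOf (A, E) := by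
  ext μ
  simp only [omegaOf, Pi.add_apply, Pi.smul_apply, smul_eq_mul, mul_sum, ← sum_add_distrib]
  refine sum_congr rfl fun a _ => sum_congr rfl fun b _ => ?_
  ring

theorem omegaOf_single_dotProduct (A : Fin n → Fin n → ℝ) (i β γ : Fin n) (v : Fin n → ℝ) :
    omegaOf (A, fun i' β' γ' => if i' = i ∧ β' = β ∧ γ' = γ then (1:ℝ) else 0) ⬝ᵥ v
      = (1 / (1 - (n : ℝ))) * (lamUp A i γ * v β - lamUp A i β * v γ) := by
  simp only [dotProduct, omegaOf, one_div, ite_and, mul_sub, mul_ite, mul_one, mul_zero,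
    sum_sub_distrib, sum_ite_irrel, sum_ite_eq', mem_univ, ↓reduceIte, sum_const_zero, sub_mul,
    ite_mul, zero_mul]
  ring

theorem omegaSqOf_eq_dotProduct (p : P) :
    omegaSqOf p = omegaOf p ⬝ᵥ (gOf p.1)⁻¹ *ᵥ omegaOf p := by
  simp only [omegaSqOf, dotProduct, Matrix.mulVec, mul_sum]
  refine sum_congr rfl fun a _ => sum_congr rfl fun b _ => ?_
  ring

theorem omegaUpOf_eq_mulVec (p : P) : omegaUpOf p = (gOf p.1)⁻¹ *ᵥ omegaOf p := rfl

theorem hasLineDerivAt_HOf_snd (A : Fin n → Fin n → ℝ) (B E : Fin n → Fin n → Fin n → ℝ) :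
    HasLineDerivAt ℝ HOf
      (((n : ℝ) - 1) * (2 - (n : ℝ)) * (Matrix.of A).det *
        (2 * (omegaOf (A, E) ⬝ᵥ omegaUpOf (A, B)))) (A, B) (0, E) := by
  have hline : ∀ t : ℝ, HOf ((A, B) + t • (0, E))
      = ((n : ℝ) - 1) * (2 - (n : ℝ)) * (Matrix.of A).det *
        ((omegaOf (A, B) + t • omegaOf (A, E)) ⬝ᵥ
          (gOf A)⁻¹ *ᵥ (omegaOf (A, B) + t • omegaOf (A, E))) := by
    intro t
    simp only [Prod.smul_mk, Prod.mk_add_mk, smul_zero, add_zero, HOf, omegaSqOf_eq_dotProduct,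
      omegaOf_add_smul]
  unfold HasLineDerivAt
  simp only [hline, omegaUpOf_eq_mulVec]
  exact ((isSymm_inv_gOf A).hasDerivAt_dotProduct_mulVec_line _ _).const_mul _

end

/-- (Lemma 2(b) of the paper.) At any pair (A,B) with A invertible,
∂H/∂B_{iβγ} = 2(n − 2) det(A) [ λ_i^γ ω^β − λ_i^β ω^γ ]. -/
theorem sap_lemma2b
    (n : ℕ) (hn : 2 ≤ n)
    (A : Fin n → Fin n → ℝ) (B : Fin n → Fin n → Fin n → ℝ)
    (hA : IsUnit (Matrix.of A).det)
    (i β γ : Fin n) :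
    fderiv ℝ (fun p : (Fin n → Fin n → ℝ) × (Fin n → Fin n → Fin n → ℝ) => HOf p)
        (A, B) (0, fun i' β' γ' => if i' = i ∧ β' = β ∧ γ' = γ then (1:ℝ) else 0)
      = 2 * ((n : ℝ) - 2) * (Matrix.of A).det *
          (lamUp A i γ * omegaUpOf (A, B) β - lamUp A i β * omegaUpOf (A, B) γ) := by
  have hn1 : (1 : ℝ) - n ≠ 0 := by
    have : (2 : ℝ) ≤ n := by exact_mod_cast hn
    linarith
  rw [← (differentiableAt_HOf hA.ne_zero B).lineDeriv_eq_fderiv,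
    (hasLineDerivAt_HOf_snd A B _).lineDeriv, omegaOf_single_dotProduct]
  field_simp
  ring
end
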